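/- arXiv:2412.16759 — 9 statements merged into one kernel-verified Lean document; each statement's English description precedes it below -/
import Mathlib

section
/- If a continuous map f : Y → S between topological spaces factors as f = p ∘ j where j : Y → X is an open embedding and p : X → S is a proper (separated and universally closed) map, then f is separated and locally proper (every point y and neighborhood V of y admit a neighborhood N ⊆ V of y and a neighborhood U of f(y) such that f restricts to a proper map N → U). -/
open Set Topology Filter

/-- Locally proper (in the sense of the paper): every point `y` and neighborhood `V` of `y`
admit neighborhoods `U ∋ f y` and `N ⊆ f⁻¹' U ∩ V` of `y` such that the restriction
`N → U` of `f` is proper, i.e. separated and universally closed. -/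
def IsLocallyProper {Y S : Type*} [TopologicalSpace Y] [TopologicalSpace S]
    (f : Y → S) : Prop :=
  ∀ y : Y, ∀ V ∈ 𝓝 y, ∃ N ∈ 𝓝 y, ∃ U ∈ 𝓝 (f y), N ⊆ f ⁻¹' U ∩ V ∧
    ∃ hm : Set.MapsTo f N U,
      IsSeparatedMap (hm.restrict f N U) ∧ IsProperMap (hm.restrict f N U)

/-- If `f = p ∘ j` with `j` an open embedding and `p` proper (separated and universally
closed), then `f` is separated and locally proper. -/
theorem stmt_0 {Y X S : Type*} [TopologicalSpace Y] [TopologicalSpace X]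
    [TopologicalSpace S] (f : Y → S) (j : Y → X) (p : X → S)
    (hj : IsOpenEmbedding j) (hps : IsSeparatedMap p) (hpp : IsProperMap p)
    (hfact : f = p ∘ j) :
    IsSeparatedMap f ∧ IsLocallyProper f := by
  subst hfact
  have hfc : Continuous (p ∘ j) := hpp.continuous.comp hj.continuous
  constructor
  · -- separatedness of `f = p ∘ j`
    intro y₁ y₂ he hne
    obtain ⟨s₁, s₂, ho₁, ho₂, hm₁, hm₂, hd⟩ :=
      hps (j y₁) (j y₂) he (fun h => hne (hj.injective h))
    exact ⟨j ⁻¹' s₁, j ⁻¹' s₂, ho₁.preimage hj.continuous, ho₂.preimage hj.continuous,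
      hm₁, hm₂, hd.preimage j⟩
  · intro y V hV
    obtain ⟨V', hV'sub, hV'open, hyV'⟩ := mem_nhds_iff.mp hV
    set x := j y with hx
    set s := p (j y) with hs
    -- `W` is the open image of `V'`
    set W : Set X := j '' V' with hW
    have hWopen : IsOpen W := hj.isOpenMap _ hV'open
    have hxW : x ∈ W := ⟨y, hyV', rfl⟩
    -- the fiber is compact
    have hF : IsCompact (p ⁻¹' {s}) := hpp.isCompact_preimage isCompact_singleton
    set K : Set X := p ⁻¹' {s} ∩ Wᶜ with hK
    have hKcomp : IsCompact K := hF.inter_right hWopen.isClosed_compl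
    -- separate `x` from `K`
    have hdisj : Disjoint (𝓝 x) (𝓝ˢ K) := by
      rw [hKcomp.disjoint_nhdsSet_right]
      intro z hz
      exact isSeparatedMap_iff_disjoint_nhds.mp hps x z hz.1.symm
        (fun h => hz.2 (h ▸ hxW))
    have hsep : SeparatedNhds {x} K := by
      rw [separatedNhds_iff_disjoint, nhdsSet_singleton]
      exact hdisj
    obtain ⟨A, B, hAopen, hBopen, hxA, hKB, hAB⟩ := hsep
    have hxA : x ∈ A := hxA rfl
    set N₀ : Set X := A ∩ W with hN₀
    have hN₀open : IsOpen N₀ := hAopen.inter hWopen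
    have hxN₀ : x ∈ N₀ := ⟨hxA, hxW⟩
    -- tube lemma: an open `U ∋ s` with `p ⁻¹' U ⊆ W ∪ B`
    set U : Set S := (p '' (W ∪ B)ᶜ)ᶜ with hU
    have hUopen : IsOpen U :=
      (hpp.isClosedMap _ (hWopen.union hBopen).isClosed_compl).isOpen_compl
    have hsU : s ∈ U := by
      rintro ⟨z, hz, hzs⟩
      rcases (em (z ∈ W)) with h | h
      · exact hz (Or.inl h)
      · exact hz (Or.inr (hKB ⟨hzs, h⟩))
    have hpreU : p ⁻¹' U ⊆ W ∪ B := by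
      intro z hz
      by_contra h
      exact hz ⟨z, h, rfl⟩
    -- the closure of `N₀` meets `p⁻¹ U` inside `W`
    have hclA : closure N₀ ⊆ Bᶜ := by
      have : N₀ ⊆ Bᶜ := fun z hz hzB => hAB.ne_of_mem hz.1 hzB rfl
      exact closure_minimal this hBopen.isClosed_compl
    have hcl : closure N₀ ∩ p ⁻¹' U ⊆ W := by
      rintro z ⟨hz1, hz2⟩
      rcases hpreU hz2 with h | h
      · exact h
      · exact absurd h (hclA hz1)
    -- define `N`
    set N : Set Y := j ⁻¹' closure N₀ ∩ (p ∘ j) ⁻¹' U with hNdef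
    have hNnhds : N ∈ 𝓝 y := by
      have hsub : j ⁻¹' N₀ ∩ (p ∘ j) ⁻¹' U ⊆ N :=
        inter_subset_inter (preimage_mono subset_closure) le_rfl
      exact mem_of_superset
        (((hN₀open.preimage hj.continuous).inter (hUopen.preimage hfc)).mem_nhds
          ⟨hxN₀, hsU⟩) hsub
    have hNW : ∀ z ∈ N, j z ∈ W := fun z hz => hcl ⟨hz.1, hz.2⟩
    have hNV : N ⊆ V := by
      intro z hz
      obtain ⟨w, hwV', hwz⟩ := hNW z hz
      exact hV'sub (hj.injective hwz ▸ hwV')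
    have hm : Set.MapsTo (p ∘ j) N U := fun z hz => hz.2
    refine ⟨N, hNnhds, U, hUopen.mem_nhds hsU, fun z hz => ⟨hz.2, hNV hz⟩, hm, ?_, ?_⟩
    · -- separatedness of the restriction
      intro a b he hne
      have hab : j ↑a ≠ j ↑b := fun h =>
        hne (Subtype.ext (hj.injective h))
      have hpe : p (j ↑a) = p (j ↑b) := congrArg Subtype.val he
      obtain ⟨s₁, s₂, ho₁, ho₂, hm₁, hm₂, hd⟩ := hps _ _ hpe hab
      exact ⟨Subtype.val ⁻¹' (j ⁻¹' s₁), Subtype.val ⁻¹' (j ⁻¹' s₂),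
        (ho₁.preimage hj.continuous).preimage continuous_subtype_val,
        (ho₂.preimage hj.continuous).preimage continuous_subtype_val,
        hm₁, hm₂, (hd.preimage j).preimage Subtype.val⟩
    · -- properness of the restriction
      rw [isProperMap_iff_ultrafilter]
      refine ⟨hfc.restrict hm, ?_⟩
      intro 𝒰 u hu
      -- push forward to an ultrafilter on `X`
      have hval : Tendsto ((p ∘ j) ∘ (Subtype.val : N → Y)) 𝒰 (𝓝 (u : S)) :=
        (continuous_subtype_val.tendsto u).comp hu
      have hjv : Tendsto p (Ultrafilter.map (j ∘ Subtype.val) 𝒰) (𝓝 (u : S)) := by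
        rw [Ultrafilter.coe_map, tendsto_map'_iff]
        exact hval
      obtain ⟨x', hx'eq, hx'le⟩ := hpp.ultrafilter_le_nhds_of_tendsto hjv
      have htend' : Tendsto (j ∘ (Subtype.val : N → Y)) 𝒰 (𝓝 x') := by
        rw [Ultrafilter.coe_map] at hx'le
        exact hx'le
      have hx'cl : x' ∈ closure N₀ :=
        isClosed_closure.mem_of_tendsto htend'
          (Eventually.of_forall fun a => a.2.1)
      have hx'U : x' ∈ p ⁻¹' U := by rw [mem_preimage, hx'eq]; exact u.2
      have hx'W : x' ∈ W := hcl ⟨hx'cl, hx'U⟩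
      obtain ⟨y', hy'V', hy'x⟩ := hx'W
      have hy'N : y' ∈ N := ⟨by rw [mem_preimage, hy'x]; exact hx'cl,
        by rw [mem_preimage]; show p (j y') ∈ U; rw [hy'x]; exact hx'U⟩
      refine ⟨⟨y', hy'N⟩, Subtype.ext (by show p (j y') = ↑u; rw [hy'x]; exact hx'eq), ?_⟩
      -- `𝒰` converges to `⟨y', hy'N⟩`
      have htend : Tendsto (j ∘ (Subtype.val : N → Y)) 𝒰 (𝓝 (j y')) := by
        rwa [hy'x]
      have htv : Tendsto (Subtype.val : N → Y) 𝒰 (𝓝 y') :=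
        hj.isInducing.tendsto_nhds_iff.mpr htend
      rw [nhds_induced (Subtype.val : N → Y)]
      exact map_le_iff_le_comap.mp htv
end

section
/- Every separated locally proper map f : Y → S admits a fiberwise one-point compactification: there exist a topological space X, an open embedding j : Y → X, and a proper map p : X → S with f = p ∘ j. Concretely, the underlying set of X may be taken to be Y ⊔ S with the topology described by: open subsets of Y are open; for x = f(y) with N → U a proper restriction of f, the set (f⁻¹(U) − N) ⊔ U is a neighborhood of x; for x ∉ f(Y) and any open neighborhood U of x, the set f⁻¹(U) ⊔ U is a neighborhood of x. -/
/-!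
The neighborhoods of a point `x` of `S` in `Y ⊕ S` are generated by the sets `(f⁻¹ U \ K) ⊔ U`
with `U ∋ x` open and `f` proper on `K` over `U`. Properness over `U` survives finite unions of
the `K`'s and shrinking of `U`, so these sets form a filter basis, and since `f` is separated
each such `K` is closed in `f⁻¹ U`, so they are neighborhoods of each of their points.
`Sum.elim f id` is then proper: an ultrafilter whose image converges to `x` either contains some
admissible `K`, whose properness supplies a limit in `Y`, or avoids all of them and converges to
`x` itself. Local properness of `f` is what separates `y ∈ Y` from `f y ∈ S`.
-/

open Set Topology Filter

section IsProperOn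

variable {Y S : Type*} [TopologicalSpace Y] [TopologicalSpace S]

/-- The ultrafilter criterion for properness of the restriction `K → U` of `f`, phrased without
subtypes. -/
def IsProperOn (f : Y → S) (K : Set Y) (U : Set S) : Prop :=
  ∀ ⦃𝒱 : Ultrafilter Y⦄ ⦃x : S⦄, K ∈ 𝒱 → x ∈ U → Tendsto f 𝒱 (𝓝 x) →
    ∃ y ∈ K, f y = x ∧ ↑𝒱 ≤ 𝓝 y

lemma isProperOn_empty (f : Y → S) (U : Set S) : IsProperOn f ∅ U :=
  fun _ _ h => (Ultrafilter.empty_notMem h).elim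

lemma IsProperOn.mono_right {f : Y → S} {K : Set Y} {U U' : Set S} (h : IsProperOn f K U)
    (hU : U' ⊆ U) : IsProperOn f K U' :=
  fun _ _ hK hx => h hK (hU hx)

lemma IsProperOn.union {f : Y → S} {K₁ K₂ : Set Y} {U : Set S} (h₁ : IsProperOn f K₁ U)
    (h₂ : IsProperOn f K₂ U) : IsProperOn f (K₁ ∪ K₂) U := by
  intro 𝒱 x hK hx ht
  rcases Ultrafilter.union_mem_iff.1 hK with h | h
  · obtain ⟨y, hy, h'⟩ := h₁ h hx ht
    exact ⟨y, Or.inl hy, h'⟩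
  · obtain ⟨y, hy, h'⟩ := h₂ h hx ht
    exact ⟨y, Or.inr hy, h'⟩

lemma IsProperMap.isProperOn {f : Y → S} {K : Set Y} {U : Set S} {hm : MapsTo f K U}
    (hp : IsProperMap (hm.restrict f K U)) : IsProperOn f K U := by
  intro 𝒱 x hK hx ht
  have hrange : range ((↑) : K → Y) ∈ 𝒱 := by rwa [Subtype.range_coe]
  set 𝒲 : Ultrafilter K := 𝒱.comap Subtype.coe_injective hrange
  have hmap : map ((↑) : K → Y) 𝒲 = 𝒱 := map_comap_of_mem hrange
  have ht𝒲 : Tendsto (hm.restrict f K U) 𝒲 (𝓝 ⟨x, hx⟩) := by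
    rw [IsEmbedding.subtypeVal.tendsto_nhds_iff]
    change Tendsto (f ∘ ((↑) : K → Y)) 𝒲 (𝓝 x)
    rwa [← tendsto_map'_iff, hmap]
  obtain ⟨z, hz, hz𝒲⟩ := hp.ultrafilter_le_nhds_of_tendsto ht𝒲
  refine ⟨z, z.2, congrArg Subtype.val hz, ?_⟩
  rw [← hmap]
  exact (map_mono hz𝒲).trans (continuous_subtype_val.tendsto z)

lemma IsProperOn.isOpen_preimage_diff {f : Y → S} (hc : Continuous f) (hsep : IsSeparatedMap f)
    {K : Set Y} {U : Set S} (hU : IsOpen U) (h : IsProperOn f K U) :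
    IsOpen (f ⁻¹' U \ K) := by
  refine isOpen_iff_ultrafilter.2 fun y ⟨hyU, hyK⟩ 𝒱 h𝒱 => inter_mem ?_ ?_
  · exact h𝒱 ((hU.preimage hc).mem_nhds hyU)
  · refine Ultrafilter.compl_mem_iff_notMem.2 fun hK => ?_
    obtain ⟨y', hy'K, hfy', h𝒱'⟩ := h hK hyU ((hc.tendsto y).mono_left h𝒱)
    obtain rfl : y' = y := by
      by_contra hne
      exact 𝒱.neBot.ne <| disjoint_self.1 <|
        (isSeparatedMap_iff_disjoint_nhds.1 hsep y' y hfy' hne).mono h𝒱' h𝒱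
    exact hyK hy'K

end IsProperOn

namespace FiberwiseOnePoint

variable {Y S : Type*} (f : Y → S)

def basicNhd (U : Set S) (K : Set Y) : Set (Y ⊕ S) :=
  Sum.inl '' (f ⁻¹' U \ K) ∪ Sum.inr '' U

variable {f} in
lemma basicNhd_mono {U U' : Set S} {K K' : Set Y} (hU : U' ⊆ U) (hK : K ⊆ K') :
    basicNhd f U' K' ⊆ basicNhd f U K :=
  union_subset_union (image_mono (sdiff_subset_sdiff (preimage_mono hU) hK)) (image_mono hU)

lemma preimage_sumElim_diff_image_inl (U : Set S) (K : Set Y) :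
    Sum.elim f id ⁻¹' U \ Sum.inl '' K = basicNhd f U K := by
  ext (y | x) <;> simp [basicNhd]

variable [TopologicalSpace Y] [TopologicalSpace S]

lemma isBasis_basicNhd (x : S) :
    IsBasis (fun i : Set S × Set Y => IsOpen i.1 ∧ x ∈ i.1 ∧ IsProperOn f i.2 i.1)
      (fun i => basicNhd f i.1 i.2) where
  nonempty := ⟨(univ, ∅), isOpen_univ, mem_univ x, isProperOn_empty f univ⟩
  inter := by
    rintro ⟨U₁, K₁⟩ ⟨U₂, K₂⟩ ⟨hU₁, hx₁, hK₁⟩ ⟨hU₂, hx₂, hK₂⟩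
    refine ⟨(U₁ ∩ U₂, K₁ ∪ K₂), ⟨hU₁.inter hU₂, ⟨hx₁, hx₂⟩,
      (hK₁.mono_right inter_subset_left).union (hK₂.mono_right inter_subset_right)⟩, ?_⟩
    exact subset_inter (basicNhd_mono inter_subset_left subset_union_left)
      (basicNhd_mono inter_subset_right subset_union_right)

def nhdsInr (x : S) : Filter (Y ⊕ S) :=
  (isBasis_basicNhd f x).filter

lemma hasBasis_nhdsInr (x : S) :
    (nhdsInr f x).HasBasis (fun i : Set S × Set Y => IsOpen i.1 ∧ x ∈ i.1 ∧ IsProperOn f i.2 i.1)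
      (fun i => basicNhd f i.1 i.2) :=
  (isBasis_basicNhd f x).hasBasis

def nhdsFilter : Y ⊕ S → Filter (Y ⊕ S) :=
  Sum.elim (fun y => map Sum.inl (𝓝 y)) (nhdsInr f)

variable {f}

lemma basicNhd_mem_nhdsInr {x : S} {U : Set S} {K : Set Y} (hU : U ∈ 𝓝 x)
    (hK : IsProperOn f K U) : basicNhd f U K ∈ nhdsInr f x :=
  (hasBasis_nhdsInr f x).mem_iff.2 ⟨(interior U, K), ⟨isOpen_interior,
    mem_interior_iff_mem_nhds.2 hU, hK.mono_right interior_subset⟩,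
    basicNhd_mono interior_subset subset_rfl⟩

lemma basicNhd_mem_nhdsFilter (hc : Continuous f) (hsep : IsSeparatedMap f) {U : Set S}
    {K : Set Y} (hU : IsOpen U) (hK : IsProperOn f K U) {b : Y ⊕ S} (hb : b ∈ basicNhd f U K) :
    basicNhd f U K ∈ nhdsFilter f b := by
  rcases hb with ⟨y, hy, rfl⟩ | ⟨x, hx, rfl⟩
  · exact mem_of_superset
      (image_mem_map ((hK.isOpen_preimage_diff hc hsep hU).mem_nhds hy)) subset_union_left
  · exact (hasBasis_nhdsInr f x).mem_of_mem (i := (U, K)) ⟨hU, hx, hK⟩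

variable (f) in
abbrev topology : TopologicalSpace (Y ⊕ S) :=
  TopologicalSpace.mkOfNhds (nhdsFilter f)

lemma nhds_topology (hc : Continuous f) (hsep : IsSeparatedMap f) (a : Y ⊕ S) :
    @nhds _ (topology f) a = nhdsFilter f a := by
  refine TopologicalSpace.nhds_mkOfNhds _ _ (fun b => ?_) (fun b s hs => ?_)
  · rcases b with y | x
    · exact (map_pure Sum.inl y).symm.le.trans (map_mono (pure_le_nhds y))
    · exact (hasBasis_nhdsInr f x).ge_iff.2 fun i ⟨_, hx, _⟩ => mem_pure.2 (Or.inr ⟨x, hx, rfl⟩)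
  · rcases b with y | x
    · exact eventually_map.2 (eventually_eventually_nhds.2 hs)
    · obtain ⟨⟨U, K⟩, ⟨hU, hx, hK⟩, hs⟩ := (hasBasis_nhdsInr f x).mem_iff.1 hs
      refine mem_of_superset ((hasBasis_nhdsInr f x).mem_of_mem (i := (U, K)) ⟨hU, hx, hK⟩) ?_
      exact fun b hb => mem_of_superset (basicNhd_mem_nhdsFilter hc hsep hU hK hb) hs

lemma tendsto_sumElim_nhdsFilter (hc : Continuous f) (a : Y ⊕ S) :
    Tendsto (Sum.elim f id) (nhdsFilter f a) (𝓝 (Sum.elim f id a)) := by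
  rcases a with y | x
  · exact tendsto_map'_iff.2 (hc.tendsto y)
  · refine fun s hs => mem_map.2 (mem_of_superset
      (basicNhd_mem_nhdsInr hs (isProperOn_empty f s)) ?_)
    exact (preimage_sumElim_diff_image_inl f s ∅).ge.trans sdiff_subset

lemma disjoint_nhdsFilter_inl_inr (hlp : IsLocallyProper f) (y : Y) :
    Disjoint (nhdsFilter f (Sum.inl y)) (nhdsFilter f (Sum.inr (f y))) := by
  obtain ⟨N, hN, U, hU, -, _, -, hp⟩ := hlp y univ univ_mem
  refine disjoint_of_disjoint_of_mem ?_ (image_mem_map hN)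
    (basicNhd_mem_nhdsInr hU hp.isProperOn)
  exact disjoint_union_right.2 ⟨(disjoint_image_iff Sum.inl_injective).2 disjoint_sdiff_right,
    disjoint_image_inl_image_inr⟩

lemma disjoint_nhdsFilter_of_ne (hsep : IsSeparatedMap f) (hlp : IsLocallyProper f)
    {a b : Y ⊕ S} (h : Sum.elim f id a = Sum.elim f id b) (hne : a ≠ b) :
    Disjoint (nhdsFilter f a) (nhdsFilter f b) := by
  rcases a with y₁ | x₁ <;> rcases b with y₂ | x₂
  · exact (disjoint_map Sum.inl_injective).2
      (isSeparatedMap_iff_disjoint_nhds.1 hsep y₁ y₂ h (ne_of_apply_ne _ hne))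
  · obtain rfl : f y₁ = x₂ := h
    exact disjoint_nhdsFilter_inl_inr hlp y₁
  · obtain rfl : f y₂ = x₁ := h.symm
    exact (disjoint_nhdsFilter_inl_inr hlp y₂).symm
  · exact absurd (congrArg Sum.inr h) hne

lemma exists_le_nhdsFilter_of_tendsto {𝒰 : Ultrafilter (Y ⊕ S)} {x : S}
    (hx : Tendsto (Sum.elim f id) 𝒰 (𝓝 x)) :
    ∃ a, Sum.elim f id a = x ∧ ↑𝒰 ≤ nhdsFilter f a := by
  by_cases h : ∃ U K, IsOpen U ∧ x ∈ U ∧ IsProperOn f K U ∧ Sum.inl '' K ∈ 𝒰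
  · obtain ⟨U, K, -, hxU, hK, hK𝒰⟩ := h
    have hrange : range Sum.inl ∈ 𝒰 := mem_of_superset hK𝒰 (image_subset_range _ _)
    set 𝒱 : Ultrafilter Y := 𝒰.comap Sum.inl_injective hrange
    have hmap : map Sum.inl (𝒱 : Filter Y) = (𝒰 : Filter (Y ⊕ S)) := map_comap_of_mem hrange
    have hf : Tendsto f 𝒱 (𝓝 x) := by
      rwa [← hmap, tendsto_map'_iff] at hx
    obtain ⟨y, -, rfl, hy⟩ := hK ((Ultrafilter.mem_comap _ _ _).2 hK𝒰) hxU hf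
    exact ⟨Sum.inl y, rfl, hmap ▸ map_mono hy⟩
  · push Not at h
    refine ⟨Sum.inr x, rfl, (hasBasis_nhdsInr f x).ge_iff.2 ?_⟩
    rintro ⟨U, K⟩ ⟨hU, hxU, hK⟩
    rw [← preimage_sumElim_diff_image_inl]
    exact inter_mem (hx (hU.mem_nhds hxU))
      (Ultrafilter.compl_mem_iff_notMem.2 (h U K hU hxU hK))

end FiberwiseOnePoint

/-- Every separated locally proper map `f : Y → S` admits a fiberwise one-point
compactification: there is a topology on `Y ⊕ S` making `Sum.inl : Y → Y ⊕ S` an open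
embedding and `p := Sum.elim f id : Y ⊕ S → S` a proper (separated, universally closed)
map with `f = p ∘ Sum.inl`; moreover the topology is described by: for `x = f y` and
neighborhoods `U ∋ x`, `N ∋ y` with a proper restriction `N → U`, the set
`(f⁻¹ U \ N) ⊔ U` is a neighborhood of `x`, and for `x ∉ f(Y)` and `U ∋ x` open, the set
`f⁻¹ U ⊔ U` is a neighborhood of `x`. -/
theorem stmt_1 {Y S : Type*} [TopologicalSpace Y] [TopologicalSpace S] (f : Y → S)
    (hc : Continuous f) (hsep : IsSeparatedMap f) (hlp : IsLocallyProper f) :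
    ∃ τ : TopologicalSpace (Y ⊕ S),
      IsOpenEmbedding (Sum.inl : Y → Y ⊕ S) ∧
      IsSeparatedMap (Sum.elim f id : Y ⊕ S → S) ∧
      IsProperMap (Sum.elim f id : Y ⊕ S → S) ∧
      (Sum.elim f id : Y ⊕ S → S) ∘ Sum.inl = f ∧
      (∀ (y : Y) (U : Set S) (N : Set Y), U ∈ 𝓝 (f y) → N ∈ 𝓝 y →
        (∃ hm : Set.MapsTo f N U,
          IsSeparatedMap (hm.restrict f N U) ∧ IsProperMap (hm.restrict f N U)) →
        (Sum.inl '' (f ⁻¹' U \ N) ∪ Sum.inr '' U) ∈ 𝓝 (Sum.inr (f y) : Y ⊕ S)) ∧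
      (∀ x : S, x ∉ Set.range f → ∀ U : Set S, IsOpen U → x ∈ U →
        (Sum.inl '' (f ⁻¹' U) ∪ Sum.inr '' U) ∈ 𝓝 (Sum.inr x : Y ⊕ S)) := by
  let := FiberwiseOnePoint.topology f
  have hnhds : ∀ a : Y ⊕ S, 𝓝 a = FiberwiseOnePoint.nhdsFilter f a :=
    FiberwiseOnePoint.nhds_topology hc hsep
  refine ⟨FiberwiseOnePoint.topology f, ?_, ?_, ?_, Sum.elim_comp_inl f id,
    fun y U N hU _ ⟨_, _, hp⟩ => ?_, fun x _ U hU hxU => ?_⟩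
  · refine .of_continuous_injective_isOpenMap (continuous_iff_continuousAt.2 fun y => ?_)
      Sum.inl_injective (.of_nhds_le fun y => (hnhds (Sum.inl y)).le)
    rw [ContinuousAt, hnhds]
    exact tendsto_map
  · refine isSeparatedMap_iff_disjoint_nhds.2 fun a b h hne => ?_
    simpa only [hnhds] using FiberwiseOnePoint.disjoint_nhdsFilter_of_ne hsep hlp h hne
  · refine isProperMap_iff_ultrafilter.2 ⟨continuous_iff_continuousAt.2 fun a => ?_,
      fun 𝒰 x hx => by
        simpa only [hnhds] using FiberwiseOnePoint.exists_le_nhdsFilter_of_tendsto hx⟩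
    rw [ContinuousAt, hnhds]
    exact FiberwiseOnePoint.tendsto_sumElim_nhdsFilter hc a
  · rw [hnhds]
    exact FiberwiseOnePoint.basicNhd_mem_nhdsInr hU hp.isProperOn
  · rw [hnhds, ← sdiff_empty (s := f ⁻¹' U)]
    exact FiberwiseOnePoint.basicNhd_mem_nhdsInr (hU.mem_nhds hxU) (isProperOn_empty f U)
end

section
/- The class of separated locally proper maps of topological spaces is closed under composition. -/
/-!
Two points of `X` with distinct images under `f` are separated by preimages of open sets
separating their images under `g`; this is where `g ∘ f` inherits separatedness.

For local properness at `x` inside `V`, take a separated proper restriction `N → U` of `f` with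
`N ⊆ V`, then one `M → W` of `g` at `f x` with `M ⊆ U`. Restricting `N → U` over `M` gives
`N ∩ f⁻¹ M → M`, still separated and proper (proper maps are stable under restriction over
a subset of the target), and composing with `M → W` gives the required restriction of `g ∘ f`.
Continuity of `f`, needed to see that `N ∩ f⁻¹ M` is a neighbourhood of `x`, follows from local
properness itself.
-/

open Set Topology Filter

section

variable {X Y Z : Type*} [TopologicalSpace X]

namespace IsSeparatedMap

theorem of_comp {f : X → Y} {g : Y → Z} (h : IsSeparatedMap (g ∘ f)) : IsSeparatedMap f :=
  fun x₁ x₂ he ↦ h x₁ x₂ (congrArg g he)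

theorem comp [TopologicalSpace Y] {f : X → Y} {g : Y → Z} (hg : IsSeparatedMap g)
    (hf : IsSeparatedMap f) (hfc : Continuous f) : IsSeparatedMap (g ∘ f) := by
  intro x₁ x₂ he hne
  by_cases hfe : f x₁ = f x₂
  · exact hf x₁ x₂ hfe hne
  · obtain ⟨s₁, s₂, hs₁, hs₂, hx₁, hx₂, hdisj⟩ := hg (f x₁) (f x₂) he hfe
    exact ⟨f ⁻¹' s₁, f ⁻¹' s₂, hs₁.preimage hfc, hs₂.preimage hfc, hx₁, hx₂, hdisj.preimage f⟩

end IsSeparatedMap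

variable {f : X → Y} {N N' : Set X} {U M : Set Y}

theorem IsSeparatedMap.mapsToRestrict_of_subset {hm : MapsTo f N U}
    (hs : IsSeparatedMap (hm.restrict f N U)) (hN : N' ⊆ N) (hM : M ⊆ U) (hm' : MapsTo f N' M) :
    IsSeparatedMap (hm'.restrict f N' M) :=
  IsSeparatedMap.of_comp (g := inclusion hM)
    (hs.comp_right (continuous_inclusion hN) (inclusion_injective hN))

variable [TopologicalSpace Y]

theorem IsProperMap.continuousOn_of_mapsToRestrict {hm : MapsTo f N U}
    (hp : IsProperMap (hm.restrict f N U)) : ContinuousOn f N :=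
  continuousOn_iff_continuous_domRestrict.2 (continuous_subtype_val.comp hp.continuous)

theorem IsProperMap.mapsToRestrict_inter_preimage {hm : MapsTo f N U}
    (hp : IsProperMap (hm.restrict f N U)) (hM : M ⊆ U) (hm' : MapsTo f (N ∩ f ⁻¹' M) M) :
    IsProperMap (hm'.restrict f (N ∩ f ⁻¹' M) M) := by
  -- `toSub ∘ _ ∘ toPreimage` is `restrictPreimage` of `hm.restrict`, with `toSub` injective and
  -- `toPreimage` surjective
  let toSub : M → (Subtype.val ⁻¹' M : Set U) := fun y ↦ ⟨⟨y, hM y.2⟩, y.2⟩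
  let toPreimage : (hm.restrict f N U ⁻¹' (Subtype.val ⁻¹' M)) → ↥(N ∩ f ⁻¹' M) :=
    fun x ↦ ⟨x.1, x.1.2, x.2⟩
  have hcont : Continuous (hm'.restrict f (N ∩ f ⁻¹' M) M) :=
    (hp.continuousOn_of_mapsToRestrict.mono inter_subset_left).mapsToRestrict hm'
  have hcontPre : Continuous toPreimage :=
    (continuous_subtype_val.comp continuous_subtype_val).subtype_mk _
  have hcontSub : Continuous toSub :=
    (continuous_subtype_val.subtype_mk _).subtype_mk _
  have hpPre : IsProperMap (hm'.restrict f (N ∩ f ⁻¹' M) M ∘ toPreimage) :=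
    isProperMap_of_comp_of_inj (hcont.comp hcontPre) hcontSub
      (hp.restrictPreimage (Subtype.val ⁻¹' M)) fun y₁ y₂ h ↦ by
        simpa [toSub, Subtype.ext_iff] using h
  exact isProperMap_of_comp_of_surj hcontPre hcont hpPre fun x ↦
    ⟨⟨⟨x.1, x.2.1⟩, x.2.2⟩, rfl⟩

variable [TopologicalSpace Z]

namespace IsLocallyProper

variable {g : Y → Z}

theorem continuous (hf : IsLocallyProper f) : Continuous f := by
  refine continuous_iff_continuousAt.2 fun x ↦ ?_
  obtain ⟨N, hN, U, -, -, _, -, hp⟩ := hf x univ univ_mem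
  exact hp.continuousOn_of_mapsToRestrict.continuousAt hN

theorem comp (hg : IsLocallyProper g) (hf : IsLocallyProper f) : IsLocallyProper (g ∘ f) := by
  intro x V hV
  obtain ⟨N, hN, U, hU, hNU, hmf, hsf, hpf⟩ := hf x V hV
  obtain ⟨M, hM, W, hW, hMW, hmg, hsg, hpg⟩ := hg (f x) U hU
  have hMU : M ⊆ U := fun y hy ↦ (hMW hy).2
  have hmNM : MapsTo f (N ∩ f ⁻¹' M) M := fun _ hx ↦ hx.2
  have hpNM := hpf.mapsToRestrict_inter_preimage hMU hmNM
  refine ⟨N ∩ f ⁻¹' M, inter_mem hN (hf.continuous.continuousAt.preimage_mem_nhds hM), W, hW,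
    fun y hy ↦ ⟨(hMW hy.2).1, (hNU hy.1).2⟩, hmg.comp hmNM, ?_, hpg.comp hpNM⟩
  exact hsg.comp (hsf.mapsToRestrict_of_subset inter_subset_left hMU hmNM) hpNM.continuous

end IsLocallyProper

end

theorem stmt_2_general {X Y Z : Type*} [TopologicalSpace X] [TopologicalSpace Y]
    [TopologicalSpace Z] (f : X → Y) (g : Y → Z)
    (hfs : IsSeparatedMap f) (hgs : IsSeparatedMap g)
    (hf : IsLocallyProper f) (hg : IsLocallyProper g) :
    IsSeparatedMap (g ∘ f) ∧ IsLocallyProper (g ∘ f) :=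
  ⟨hgs.comp hfs hf.continuous, hg.comp hf⟩

/-- The class of separated locally proper maps is closed under composition. -/
theorem stmt_2 {X Y Z : Type*} [TopologicalSpace X] [TopologicalSpace Y]
    [TopologicalSpace Z] (f : X → Y) (g : Y → Z)
    (hfc : Continuous f) (hgc : Continuous g)
    (hfs : IsSeparatedMap f) (hgs : IsSeparatedMap g)
    (hf : IsLocallyProper f) (hg : IsLocallyProper g) :
    IsSeparatedMap (g ∘ f) ∧ IsLocallyProper (g ∘ f) :=
  stmt_2_general f g hfs hgs hf hg
end

section
/- The class of separated locally proper maps of topological spaces is stable under base change: if f : Y → S is separated locally proper and g : S' → S is any continuous map, then the pullback f' : Y ×_S S' → S' is separated locally proper. -/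
/-!
Separatedness and properness are each stable under base change: for properness, an ultrafilter
on `Y ×_S S'` whose projection converges to `s'` has first projection converging to some `y`
over `g s'`, by properness of `f`. Locality is preserved because, over a neighbourhood `U'` of a
point of `S'` mapping into `U`, a neighbourhood of the form `(N ×_S S') ∩ (Y × U')` in the fibre
product is the base change of the proper map `N → U` along `U' → U`.
-/

open Set Topology Filter

namespace Function.Pullback

variable {X Y A : Type*} [TopologicalSpace X] [TopologicalSpace A] {f : X → Y} {g : A → Y}

@[fun_prop]
lemma continuous_fst : Continuous (@fst X Y A f g) :=
  _root_.continuous_fst.comp continuous_subtype_val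

@[fun_prop]
lemma continuous_snd : Continuous (@snd X Y A f g) :=
  _root_.continuous_snd.comp continuous_subtype_val

lemma tendsto_nhds_iff {α : Type*} {l : Filter α} {φ : α → f.Pullback g} {p : f.Pullback g} :
    Tendsto φ l (𝓝 p) ↔ Tendsto (fst ∘ φ) l (𝓝 p.fst) ∧ Tendsto (snd ∘ φ) l (𝓝 p.snd) := by
  rw [tendsto_subtype_rng, nhds_prod_eq, tendsto_prod_iff']
  rfl

def restrictHomeomorph {N : Set X} {U : Set Y} {U' : Set A}
    (hf : MapsTo f N U) (hg : MapsTo g U' U) :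
    {p : f.Pullback g | p.fst ∈ N ∧ p.snd ∈ U'} ≃ₜ
      (hf.restrict f N U).Pullback (hg.restrict g U' U) where
  toFun p := ⟨(⟨p.1.fst, p.2.1⟩, ⟨p.1.snd, p.2.2⟩), Subtype.ext p.1.2⟩
  invFun q := ⟨⟨(q.1.1.1, q.1.2.1), congrArg Subtype.val q.2⟩, q.1.1.2, q.1.2.2⟩
  left_inv _ := rfl
  right_inv _ := rfl
  continuous_toFun := by fun_prop
  continuous_invFun := by fun_prop

end Function.Pullback

open Function.Pullback

section

variable {X Y A : Type*} [TopologicalSpace X] [TopologicalSpace Y] [TopologicalSpace A]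
  {f : X → Y} {g : A → Y}

theorem IsProperMap.pullback (hf : IsProperMap f) (hg : Continuous g) :
    IsProperMap (@snd X Y A f g) := by
  refine isProperMap_iff_ultrafilter.mpr ⟨continuous_snd, fun 𝒰 a ha ↦ ?_⟩
  have hfa : Tendsto f (𝒰.map fst) (𝓝 (g a)) := by
    have : f ∘ fst = g ∘ @snd X Y A f g := funext Subtype.prop
    rw [Ultrafilter.coe_map, tendsto_map'_iff, this]
    exact (hg.tendsto a).comp ha
  obtain ⟨x, hxa, hx⟩ := hf.ultrafilter_le_nhds_of_tendsto hfa
  exact ⟨⟨(x, a), hxa⟩, rfl, tendsto_nhds_iff.mpr ⟨hx, ha⟩⟩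

theorem IsLocallyProper.pullback (hf : IsLocallyProper f) (hg : Continuous g) :
    IsLocallyProper (@snd X Y A f g) := by
  intro p V hV
  obtain ⟨t, ht, htV⟩ := (mem_nhds_subtype _ p V).mp hV
  obtain ⟨Vx, hVx, Va, hVa, hVt⟩ := mem_nhds_prod_iff.mp ht
  obtain ⟨N, hN, U, hU, hNU, hm, hsep, hprop⟩ := hf p.fst Vx hVx
  set U' := g ⁻¹' U ∩ Va
  have hU' : U' ∈ 𝓝 p.snd := inter_mem (hg.continuousAt.preimage_mem_nhds (p.2 ▸ hU)) hVa
  have hN' : {q : f.Pullback g | q.fst ∈ N ∧ q.snd ∈ U'} ∈ 𝓝 p :=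
    inter_mem (continuous_fst.continuousAt.preimage_mem_nhds hN)
      (continuous_snd.continuousAt.preimage_mem_nhds hU')
  have hg' : MapsTo g U' U := fun _ ha ↦ ha.1
  let e := restrictHomeomorph hm hg'
  refine ⟨_, hN', U', hU', fun q hq ↦ ⟨hq.2, htV (hVt ⟨(hNU hq.1).2, hq.2.2⟩)⟩,
    fun _ hq ↦ hq.2, ?_, ?_⟩
  · exact (hsep.pullback _).comp_right e.continuous e.injective
  · exact (hprop.pullback (hg.restrict hg')).comp e.isProperMap

end

theorem stmt_3_general {Y S S' : Type*} [TopologicalSpace Y] [TopologicalSpace S]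
    [TopologicalSpace S'] (f : Y → S) (g : S' → S)
    (hgc : Continuous g)
    (hfs : IsSeparatedMap f) (hf : IsLocallyProper f) :
    IsSeparatedMap (fun p : {p : Y × S' // f p.1 = g p.2} => p.1.2) ∧
    IsLocallyProper (fun p : {p : Y × S' // f p.1 = g p.2} => p.1.2) :=
  ⟨hfs.pullback g, hf.pullback hgc⟩

/-- Separated locally proper maps are stable under base change: if `f : Y → S` is
separated locally proper and `g : S' → S` is continuous, then the projection
`Y ×_S S' → S'` is separated locally proper. -/
theorem stmt_3 {Y S S' : Type*} [TopologicalSpace Y] [TopologicalSpace S]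
    [TopologicalSpace S'] (f : Y → S) (g : S' → S)
    (hfc : Continuous f) (hgc : Continuous g)
    (hfs : IsSeparatedMap f) (hf : IsLocallyProper f) :
    IsSeparatedMap (fun p : {p : Y × S' // f p.1 = g p.2} => p.1.2) ∧
    IsLocallyProper (fun p : {p : Y × S' // f p.1 = g p.2} => p.1.2) :=
  stmt_3_general f g hgc hfs hf
end

section
/- Let φ : S → Hom(H, H') be a norm-continuous family of bounded linear maps between Hilbert spaces such that φ(x) is surjective for every x ∈ S. Then the family of kernels ker(φ(x)) forms a Hilbert vector bundle over S; i.e., locally on S, there are continuous trivializations identifying the kernels with a fixed closed subspace. -/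
/-!
Fix `x₀` and a continuous projection `P` of `H` onto `K = ker (φ x₀)` (the orthogonal one). Since
`φ x₀` is onto, `Ψ x = (φ x, P) : H → H' × K` is an isomorphism at `x₀`, hence, invertibility being
an open condition in the norm topology and inversion being continuous, for all `x` near `x₀`.
As `K = Ψ x₀ ⁻¹' ({0} × K)` and `ker (φ x) = Ψ x ⁻¹' ({0} × K)`, the automorphism
`(Ψ x)⁻¹ ∘ Ψ x₀` of `H` carries `K` onto `ker (φ x)`.
-/

open Topology Function

namespace ContinuousLinearMap

variable {𝕜 E F : Type*} [NontriviallyNormedField 𝕜] [NormedAddCommGroup E] [NormedSpace 𝕜 E]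
  [CompleteSpace E] [NormedAddCommGroup F] [NormedSpace 𝕜 F] {S : Type*} [TopologicalSpace S]

theorem exists_nhds_coe_eq_continuousOn_symm {Ψ : S → E →L[𝕜] F} (hΨ : Continuous Ψ) {x₀ : S}
    (h₀ : (Ψ x₀).IsInvertible) :
    ∃ U ∈ 𝓝 x₀, ∃ e : S → E ≃L[𝕜] F, (∀ x ∈ U, (e x : E →L[𝕜] F) = Ψ x) ∧
      ContinuousOn (fun x => ((e x).symm : F →L[𝕜] E)) U := by
  have hU : {x | (Ψ x).IsInvertible} ∈ 𝓝 x₀ :=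
    (ContinuousLinearEquiv.isOpen.preimage hΨ).mem_nhds h₀
  have : ∀ x, ∃ e : E ≃L[𝕜] F, (Ψ x).IsInvertible → (e : E →L[𝕜] F) = Ψ x := by
    intro x
    by_cases h : (Ψ x).IsInvertible
    · exact ⟨h.choose, fun _ => h.choose_spec⟩
    · exact ⟨h₀.choose, h.elim⟩
  choose e he using this
  refine ⟨_, hU, e, fun x hx => he x hx, ?_⟩
  refine ContinuousOn.congr (f := fun x => inverse (Ψ x)) ?_ fun x hx => ?_
  · intro x hx
    exact ((IsInvertible.contDiffAt_map_inverse (n := 0) hx).continuousAt.comp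
      hΨ.continuousAt).continuousWithinAt
  · simp only [← he x hx, inverse_equiv]

theorem exists_local_trivialization_ker {G : Type*} [NormedAddCommGroup G] [NormedSpace 𝕜 G]
    [CompleteSpace G] {φ : S → E →L[𝕜] G} (hφ : Continuous φ) {x₀ : S}
    (hsurj : Surjective (φ x₀)) (hK : (LinearMap.ker (φ x₀ : E →ₗ[𝕜] G)).ClosedComplemented) :
    ∃ U ∈ 𝓝 x₀, ∃ T : S → (E ≃L[𝕜] E),
      ContinuousOn (fun x => (T x : E →L[𝕜] E)) U ∧
      ContinuousOn (fun x => ((T x).symm : E →L[𝕜] E)) U ∧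
      ∀ x ∈ U, Submodule.map ((T x : E →L[𝕜] E) : E →ₗ[𝕜] E)
        (LinearMap.ker (φ x₀ : E →ₗ[𝕜] G)) = LinearMap.ker (φ x : E →ₗ[𝕜] G) := by
  obtain ⟨P, hP⟩ := hK
  set Ψ : S → E →L[𝕜] G × LinearMap.ker (φ x₀ : E →ₗ[𝕜] G) := fun x => (φ x).prod P
  have hΨ : Continuous Ψ := (prodₗᵢ 𝕜).continuous.comp (hφ.prodMk continuous_const)
  set e₀ := equivProdOfSurjectiveOfIsCompl (φ x₀) P (LinearMap.range_eq_top.mpr hsurj)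
    (LinearMap.range_eq_of_proj hP) (LinearMap.isCompl_of_proj hP)
  obtain ⟨U, hU, e, he, hcont⟩ := exists_nhds_coe_eq_continuousOn_symm hΨ ⟨e₀, rfl⟩
  refine ⟨U, hU, fun x => e₀.trans (e x).symm, ?_, ?_, fun x hx => ?_⟩
  · exact (hcont.clm_comp (continuousOn_const (c := (e₀ : E →L[𝕜] _)))).congr fun x _ => rfl
  · refine ((continuousOn_const (c := (e₀.symm : _ →L[𝕜] E))).clm_comp hΨ.continuousOn).congr
      fun x hx => ?_
    dsimp only
    rw [← he x hx]
    rfl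
  · have hφx (z : E) : φ x z = (e x z).1 := by rw [← ContinuousLinearEquiv.coe_coe, he x hx]; rfl
    have hφx₀ (z : G × _) : φ x₀ (e₀.symm z) = z.1 := congrArg Prod.fst (e₀.apply_symm_apply z)
    ext y
    simp only [Submodule.mem_map, LinearMap.mem_ker, ContinuousLinearMap.coe_coe]
    constructor
    · rintro ⟨k, hk, rfl⟩
      rw [hφx]
      change (e x ((e x).symm (e₀ k))).1 = 0
      rw [ContinuousLinearEquiv.apply_symm_apply]
      exact hk
    · intro hy
      exact ⟨e₀.symm (e x y), by rw [hφx₀, ← hφx, hy], by simp⟩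

end ContinuousLinearMap

/-- For a norm-continuous family `φ` of surjective bounded linear maps between Hilbert
spaces, the kernels `ker (φ x)` form a Hilbert vector bundle: locally on `S` there are
continuous (in the operator norm) families of linear automorphisms of `H` carrying the
fixed closed subspace `ker (φ x₀)` onto `ker (φ x)`. -/
theorem stmt_11 {S : Type*} [TopologicalSpace S]
    {H H' : Type*} [NormedAddCommGroup H] [InnerProductSpace ℝ H] [CompleteSpace H]
    [NormedAddCommGroup H'] [InnerProductSpace ℝ H'] [CompleteSpace H']
    (φ : S → H →L[ℝ] H') (hφ : Continuous φ) (hsurj : ∀ x, Surjective (φ x)) :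
    ∀ x₀ : S, ∃ U ∈ 𝓝 x₀, ∃ T : S → (H ≃L[ℝ] H),
      ContinuousOn (fun x => (T x : H →L[ℝ] H)) U ∧
      ContinuousOn (fun x => ((T x).symm : H →L[ℝ] H)) U ∧
      ∀ x ∈ U, Submodule.map ((T x : H →L[ℝ] H) : H →ₗ[ℝ] H) (LinearMap.ker (φ x₀ : H →ₗ[ℝ] H')) =
        LinearMap.ker (φ x : H →ₗ[ℝ] H') := fun x₀ =>
  ContinuousLinearMap.exists_local_trivialization_ker hφ (hsurj x₀)
    ⟨_, Submodule.orthogonalProjectionOnto_mem_subspace_eq_self⟩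
end

section
/- Let f : H' → H be a continuous map between Banach spaces of the form f = l + c, where l is a bounded linear Fredholm operator and c is a compact map (c sends bounded subsets to relatively compact subsets), and suppose preimages under f of bounded sets are bounded. Then f is a proper map: the preimage of every compact subset of H is compact. -/
/-!
Fix a continuous projection `π` onto the finite-dimensional kernel of `l`. Then `x ↦ (π x, l x)`
is injective with closed range, hence anti-Lipschitz by the open mapping theorem, hence a proper
map. Consequently a closed bounded set whose image under `l` lies in a compact set is compact:
its image under `π` is bounded in a finite-dimensional space. The preimage `P` of a compact `K`
under `l + c` is closed and bounded, and `l = (l + c) - c` maps it into the compact set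
`K - closure (c '' P)`.
-/

open Set Bornology Function

namespace ContinuousLinearMap

variable {𝕜 E F : Type*} [RCLike 𝕜] [NormedAddCommGroup E] [NormedSpace 𝕜 E]
  [NormedAddCommGroup F] [NormedSpace 𝕜 F]

theorem isProperMap_of_injective_of_isClosed_range [CompleteSpace E] [CompleteSpace F]
    (f : E →L[𝕜] F) (hf : Injective f) (hf' : IsClosed (range f)) : IsProperMap f := by
  obtain ⟨K, hK⟩ := f.antilipschitz_of_injective_of_isClosed_range hf hf'
  exact (hK.isClosedEmbedding f.uniformContinuous).isProperMap

section ProjKer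

variable (l : E →L[𝕜] F) (π : E →L[𝕜] LinearMap.ker (l : E →ₗ[𝕜] F))

theorem injective_prod_of_proj_ker (hπ : ∀ x : LinearMap.ker (l : E →ₗ[𝕜] F), π x = x) :
    Injective (π.prod l) := by
  refine (injective_iff_map_eq_zero _).2 fun x hx ↦ ?_
  obtain ⟨hπx, hlx⟩ := Prod.ext_iff.1 hx
  have hx_ker : x ∈ LinearMap.ker (l : E →ₗ[𝕜] F) := hlx
  simpa [hπ ⟨x, hx_ker⟩] using congrArg Subtype.val hπx

theorem range_prod_of_proj_ker (hπ : ∀ x : LinearMap.ker (l : E →ₗ[𝕜] F), π x = x) :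
    range (π.prod l) = univ ×ˢ range l := by
  refine Subset.antisymm (range_subset_iff.2 fun x ↦ ⟨trivial, x, rfl⟩) ?_
  rintro ⟨k, _⟩ ⟨-, y, rfl⟩
  refine ⟨y - π y + k, Prod.ext ?_ ?_⟩
  · simp [hπ]
  · have hπy := (π y).2
    have hk := k.2
    simp only [LinearMap.mem_ker, coe_coe] at hπy hk
    simp [hπy, hk]

end ProjKer

theorem isCompact_inter_preimage_of_finiteDimensional_ker [CompleteSpace E] [CompleteSpace F]
    (l : E →L[𝕜] F) [FiniteDimensional 𝕜 (LinearMap.ker (l : E →ₗ[𝕜] F))]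
    (hl : IsClosed (range l)) {S : Set E} (hS : IsBounded S) (hS' : IsClosed S) {K : Set F}
    (hK : IsCompact K) : IsCompact (S ∩ l ⁻¹' K) := by
  obtain ⟨π, hπ⟩ := Submodule.ClosedComplemented.of_finiteDimensional
    (LinearMap.ker (l : E →ₗ[𝕜] F))
  have : ProperSpace (LinearMap.ker (l : E →ₗ[𝕜] F)) := FiniteDimensional.proper 𝕜 _
  have hproper : IsProperMap (π.prod l) := by
    refine isProperMap_of_injective_of_isClosed_range _ (injective_prod_of_proj_ker l π hπ) ?_
    rw [range_prod_of_proj_ker l π hπ]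
    exact isClosed_univ.prod hl
  have hπS : IsCompact (closure (π '' S)) := (π.lipschitz.isBounded_image hS).isCompact_closure
  refine (hproper.isCompact_preimage (hπS.prod hK)).of_isClosed_subset
    (hS'.inter (hK.isClosed.preimage l.continuous)) ?_
  rintro x ⟨hxS, hxK⟩
  exact ⟨subset_closure (mem_image_of_mem π hxS), hxK⟩

end ContinuousLinearMap

theorem stmt_14_general {H' H : Type*}
    [NormedAddCommGroup H'] [NormedSpace ℝ H'] [CompleteSpace H']
    [NormedAddCommGroup H] [NormedSpace ℝ H] [CompleteSpace H]
    (l : H' →L[ℝ] H)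
    (hker : FiniteDimensional ℝ (LinearMap.ker (l : H' →ₗ[ℝ] H)))
    (hclosed : IsClosed (Set.range l))
    (c : H' → H) (hc : Continuous c)
    (hcompact : ∀ B : Set H', IsBounded B → IsCompact (closure (c '' B)))
    (hbdd : ∀ B : Set H, IsBounded B → IsBounded ((fun v => l v + c v) ⁻¹' B)) :
    ∀ K : Set H, IsCompact K → IsCompact ((fun v => l v + c v) ⁻¹' K) := by
  intro K hK
  set P := (fun v => l v + c v) ⁻¹' K
  have hP : IsBounded P := hbdd K hK.isBounded
  have hP' : IsClosed P := hK.isClosed.preimage (l.continuous.add hc)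
  set L := (fun p : H × H ↦ p.1 - p.2) '' (K ×ˢ closure (c '' P))
  have hL : IsCompact L := (hK.prod (hcompact P hP)).image continuous_sub
  have hlP : P ⊆ l ⁻¹' L := fun v hv ↦
    ⟨(l v + c v, c v), ⟨hv, subset_closure (mem_image_of_mem c hv)⟩, add_sub_cancel_right _ _⟩
  have := l.isCompact_inter_preimage_of_finiteDimensional_ker hclosed hP hP' hL
  rwa [inter_eq_left.2 hlP] at this

/-- If `f = l + c : H' → H` with `l` a bounded linear Fredholm operator and `c` a compact
map (bounded sets have relatively compact images), and preimages under `f` of bounded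
sets are bounded, then `f` is proper: preimages of compact sets are compact. -/
theorem stmt_14 {H' H : Type*}
    [NormedAddCommGroup H'] [NormedSpace ℝ H'] [CompleteSpace H']
    [NormedAddCommGroup H] [NormedSpace ℝ H] [CompleteSpace H]
    (l : H' →L[ℝ] H)
    (hker : FiniteDimensional ℝ (LinearMap.ker (l : H' →ₗ[ℝ] H)))
    (hcoker : FiniteDimensional ℝ (H ⧸ LinearMap.range (l : H' →ₗ[ℝ] H)))
    (hclosed : IsClosed (Set.range l))
    (c : H' → H) (hc : Continuous c)
    (hcompact : ∀ B : Set H', IsBounded B → IsCompact (closure (c '' B)))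
    (hbdd : ∀ B : Set H, IsBounded B → IsBounded ((fun v => l v + c v) ⁻¹' B)) :
    ∀ K : Set H, IsCompact K → IsCompact ((fun v => l v + c v) ⁻¹' K) :=
  stmt_14_general l hker hclosed c hc hcompact hbdd
end

section
/- Let l : H' → H be a bounded linear Fredholm operator between Banach spaces. Then l factors as l = p ∘ e where e : H' → W × H' is the closed embedding v ↦ (0, v) for some finite-dimensional vector space W (a complement to im(l) in H), and p : W × H' → H, p(w, v) = w + l(v), is a surjective bounded linear map whose kernel is finite-dimensional (isomorphic to ker(l)). -/
/-! Choose any algebraic complement `W` of `im l`; it is finite-dimensional, being isomorphic to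
the cokernel. Since `W ⊔ im l = ⊤`, the map `p (w, v) = w + l v` is onto, and since
`W ⊓ im l = ⊥`, `p (w, v) = 0` forces `w = 0` and `l v = 0`, so `ker p = 0 × ker l`. -/

open Set Function Topology

namespace Submodule

open LinearMap

variable {R M N : Type*} [Ring R] [AddCommGroup M] [Module R M] [AddCommGroup N] [Module R N]
  (W : Submodule R N) (f : M →ₗ[R] N)

theorem surjective_subtype_coprod (h : Codisjoint W (range f)) :
    Surjective (W.subtype.coprod f) := by
  rw [← range_eq_top, range_coprod, range_subtype]
  exact h.eq_top

theorem ker_subtype_coprod (h : Disjoint W (range f)) :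
    ker (W.subtype.coprod f) = (ker f).map (inr R W M) := by
  rw [ker_coprod_of_disjoint_range _ _ (by rwa [range_subtype]), ker_subtype, map_inr]

noncomputable def kerSubtypeCoprodEquiv (h : Disjoint W (range f)) :
    ker (W.subtype.coprod f) ≃ₗ[R] ker f :=
  (LinearEquiv.ofEq _ _ (W.ker_subtype_coprod f h)).trans
    ((ker f).equivMapOfInjective _ inr_injective).symm

end Submodule

theorem isClosedEmbedding_prodMkRight {X Y : Type*} [TopologicalSpace X] [TopologicalSpace Y]
    [T1Space X] (x : X) : IsClosedEmbedding (Prod.mk x : Y → X × Y) :=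
  .of_isEmbedding_isClosedMap (isEmbedding_prodMkRight x) (isClosedMap_prodMk_left x)

theorem stmt_17_general {H' H : Type*}
    [NormedAddCommGroup H'] [NormedSpace ℝ H']
    [NormedAddCommGroup H] [NormedSpace ℝ H]
    (l : H' →L[ℝ] H)
    (hker : FiniteDimensional ℝ (LinearMap.ker (l : H' →ₗ[ℝ] H)))
    (hcoker : FiniteDimensional ℝ (H ⧸ LinearMap.range (l : H' →ₗ[ℝ] H))) :
    ∃ W : Submodule ℝ H, FiniteDimensional ℝ W ∧
      IsCompl W (LinearMap.range (l : H' →ₗ[ℝ] H)) ∧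
      let p : (W × H') →ₗ[ℝ] H := (W.subtype).coprod (l : H' →ₗ[ℝ] H)
      Surjective p ∧
      Continuous p ∧
      FiniteDimensional ℝ (LinearMap.ker p) ∧
      Nonempty ((LinearMap.ker p) ≃ₗ[ℝ] (LinearMap.ker (l : H' →ₗ[ℝ] H))) ∧
      IsClosedEmbedding (fun v : H' => ((0 : W), v)) ∧
      ∀ v : H', p ((0 : W), v) = l v := by
  obtain ⟨W, hW⟩ := (LinearMap.range (l : H' →ₗ[ℝ] H)).exists_isCompl
  have hWfin : FiniteDimensional ℝ W := .equiv (Submodule.quotientEquivOfIsCompl _ W hW)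
  let e := W.kerSubtypeCoprodEquiv (l : H' →ₗ[ℝ] H) hW.symm.disjoint
  refine ⟨W, hWfin, hW.symm, W.surjective_subtype_coprod _ hW.symm.codisjoint,
    (W.subtypeL.coprod l).continuous, .equiv e.symm, ⟨e⟩,
    isClosedEmbedding_prodMkRight 0, fun v => by simp⟩

/-- A bounded linear Fredholm operator `l : H' → H` factors as `l = p ∘ e` with
`e : H' → W × H'` the closed embedding `v ↦ (0, v)` for a finite-dimensional complement
`W` of `im l`, and `p : W × H' → H`, `p (w, v) = w + l v`, a surjective continuous
linear map with finite-dimensional kernel isomorphic to `ker l`. -/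
theorem stmt_17 {H' H : Type*}
    [NormedAddCommGroup H'] [NormedSpace ℝ H'] [CompleteSpace H']
    [NormedAddCommGroup H] [NormedSpace ℝ H] [CompleteSpace H]
    (l : H' →L[ℝ] H)
    (hker : FiniteDimensional ℝ (LinearMap.ker (l : H' →ₗ[ℝ] H)))
    (hcoker : FiniteDimensional ℝ (H ⧸ LinearMap.range (l : H' →ₗ[ℝ] H)))
    (hclosed : IsClosed (Set.range l)) :
    ∃ W : Submodule ℝ H, FiniteDimensional ℝ W ∧
      IsCompl W (LinearMap.range (l : H' →ₗ[ℝ] H)) ∧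
      let p : (W × H') →ₗ[ℝ] H := (W.subtype).coprod (l : H' →ₗ[ℝ] H)
      Surjective p ∧
      Continuous p ∧
      FiniteDimensional ℝ (LinearMap.ker p) ∧
      Nonempty ((LinearMap.ker p) ≃ₗ[ℝ] (LinearMap.ker (l : H' →ₗ[ℝ] H))) ∧
      IsClosedEmbedding (fun v : H' => ((0 : W), v)) ∧
      ∀ v : H', p ((0 : W), v) = l v :=
  stmt_17_general l hker hcoker
end

section
/- Let f : L → Y be a C¹ map between Banach spaces all of whose derivatives d_v f : L → Y are Fredholm operators. Then f is locally proper: every point v ∈ L has arbitrarily small neighborhoods N and neighborhoods U of f(v) such that f restricts to a proper map N → U. Concretely, locally near v the map f factors (up to choosing a finite-dimensional complement T₀ of im(d_v f) and applying the inverse function theorem) as a closed embedding followed by a projection with finite-dimensional fibers, both of which are locally proper. -/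
open Set Topology Filter

/-!
Let `D = d_v f`, let `π` be a continuous projection of `L` onto the finite-dimensional kernel
`K` of `D`, and let `T` be a complement of the range of `D`; `T` is finite-dimensional, so `L × T`
is a Banach space. The map `(x, t) ↦ (f x + t, π x)` has the bijective derivative
`(x, t) ↦ (D x + t, π x)` at `(v, 0)`, so by the inverse function theorem it is a local
homeomorphism `e` from `L × T` to `Y × K`. Near `v`, `f` is therefore the closed embedding
`x ↦ e (x, 0)` followed by the projection `Y × K → Y`, which is proper over `Y × B` for a compact
neighbourhood `B` in the finite-dimensional space `K`.
-/

section Topology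

variable {X Y : Type*} [TopologicalSpace X] [TopologicalSpace Y]

def IsLocallyProperAt (f : X → Y) (x : X) : Prop :=
  ∀ V ∈ 𝓝 x, ∃ N ∈ 𝓝 x, ∃ U ∈ 𝓝 (f x), N ⊆ f ⁻¹' U ∩ V ∧
    ∃ hm : MapsTo f N U, IsSeparatedMap (hm.restrict f N U) ∧ IsProperMap (hm.restrict f N U)

theorem isLocallyProper_iff_forall_isLocallyProperAt {f : X → Y} :
    IsLocallyProper f ↔ ∀ x, IsLocallyProperAt f x :=
  Iff.rfl

theorem Set.MapsTo.isProperMap_restrict_of_isCompact_inter_preimage [T2Space Y]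
    [FirstCountableTopology Y] {f : X → Y} {N : Set X} {U : Set Y} (hm : MapsTo f N U)
    (hf : ContinuousOn f N) (hcpt : ∀ C ⊆ U, IsCompact C → IsCompact (N ∩ f ⁻¹' C)) :
    IsProperMap (hm.restrict f N U) := by
  refine isProperMap_iff_isCompact_preimage.2 ⟨hf.mapsToRestrict hm, fun C hC => ?_⟩
  have hCU : Subtype.val '' C ⊆ U := by rintro _ ⟨y, -, rfl⟩; exact y.2
  rw [Topology.IsEmbedding.subtypeVal.isCompact_iff]
  convert hcpt _ hCU (hC.image continuous_subtype_val) using 1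
  ext x
  simp only [mem_image, mem_preimage, mem_inter_iff]
  exact ⟨fun ⟨⟨x', hx'⟩, hC, hxx'⟩ => hxx' ▸ ⟨hx', _, hC, rfl⟩,
    fun ⟨hx, y, hy, hyx⟩ =>
      ⟨⟨x, hx⟩, (Subtype.ext hyx : y = hm.restrict f N U ⟨x, hx⟩) ▸ hy, rfl⟩⟩

theorem OpenPartialHomeomorph.isCompact_setOf_mk_mem_source_apply_mem {T Z : Type*}
    [TopologicalSpace T] [T1Space T] [TopologicalSpace Z] [T2Space Z]
    (e : OpenPartialHomeomorph (X × T) Z) (t₀ : T) {C : Set Z} (hC : IsCompact C)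
    (hCe : C ⊆ e.target) :
    IsCompact {x | (x, t₀) ∈ e.source ∧ e (x, t₀) ∈ C} := by
  have hsymm : ContinuousOn e.symm C := e.continuousOn_symm.mono hCe
  set S := C ∩ (fun z => (e.symm z).2) ⁻¹' {t₀}
  have hS : IsCompact S :=
    hC.of_isClosed_subset ((continuous_snd.comp_continuousOn hsymm).preimage_isClosed_of_isClosed
      hC.isClosed isClosed_singleton) inter_subset_left
  convert hS.image_of_continuousOn (continuous_fst.comp_continuousOn (hsymm.mono inter_subset_left))
  ext x
  constructor
  · rintro ⟨hx, hxC⟩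
    exact ⟨e (x, t₀), ⟨hxC, by simp [e.left_inv hx]⟩, by simp [e.left_inv hx]⟩
  · rintro ⟨z, ⟨hzC, hz⟩, rfl⟩
    have hzs : e.symm z = ((e.symm z).1, t₀) := Prod.ext rfl hz
    refine ⟨hzs ▸ e.map_target (hCe hzC), ?_⟩
    simpa [← hzs, e.right_inv (hCe hzC)] using hzC

theorem OpenPartialHomeomorph.isLocallyProperAt_of_apply_mk_eq {T K : Type*} [T2Space X]
    [T2Space Y] [FirstCountableTopology Y] [TopologicalSpace T] [T1Space T]
    [TopologicalSpace K] [T2Space K] [LocallyCompactSpace K]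
    (e : OpenPartialHomeomorph (X × T) (Y × K)) {f : X → Y} {p : X → K}
    (hf : Continuous f) (hp : Continuous p) {t₀ : T} (he : ∀ x, e (x, t₀) = (f x, p x))
    {x₀ : X} (hx₀ : (x₀, t₀) ∈ e.source) :
    IsLocallyProperAt f x₀ := by
  intro V hV
  have hΩ : e.target ∩ e.symm ⁻¹' (V ×ˢ univ) ∈ 𝓝 (f x₀, p x₀) := by
    rw [← he]
    exact inter_mem (e.open_target.mem_nhds (e.map_source hx₀))
      ((e.continuousAt_symm (e.map_source hx₀)).preimage_mem_nhds
        (by rw [e.left_inv hx₀]; exact prod_mem_nhds hV univ_mem))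
  obtain ⟨U, hU, B', hB', hUB'⟩ := mem_nhds_prod_iff.1 hΩ
  obtain ⟨B, hB, hBB', hBc⟩ := local_compact_nhds hB'
  have hUB : U ×ˢ B ⊆ e.target ∩ e.symm ⁻¹' (V ×ˢ univ) :=
    (prod_mono subset_rfl hBB').trans hUB'
  set N := {x | (x, t₀) ∈ e.source ∧ f x ∈ U ∧ p x ∈ B}
  have hN : N ∈ 𝓝 x₀ :=
    inter_mem ((continuous_id.prodMk continuous_const).continuousAt.preimage_mem_nhds
      (e.open_source.mem_nhds hx₀)) (inter_mem (hf.continuousAt.preimage_mem_nhds hU)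
      (hp.continuousAt.preimage_mem_nhds hB))
  have hmaps : MapsTo f N U := fun x hx => hx.2.1
  refine ⟨N, hN, U, hU, fun x hx => ⟨hx.2.1, ?_⟩, hmaps, T2Space.isSeparatedMap _,
    hmaps.isProperMap_restrict_of_isCompact_inter_preimage hf.continuousOn fun C hCU hC => ?_⟩
  · have := (hUB (show (f x, p x) ∈ U ×ˢ B from ⟨hx.2.1, hx.2.2⟩)).2
    rw [mem_preimage, ← he, e.left_inv hx.1] at this
    exact this.1
  · convert e.isCompact_setOf_mk_mem_source_apply_mem t₀ (hC.prod hBc)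
      (fun z hz => (hUB ⟨hCU hz.1, hz.2⟩).1) using 1
    ext x
    simp only [N, he, mem_inter_iff, mem_ofPred_eq, mem_preimage, mem_prod]
    constructor
    · rintro ⟨⟨hxs, -, hpx⟩, hfx⟩
      exact ⟨hxs, hfx, hpx⟩
    · rintro ⟨hxs, hfx, hpx⟩
      exact ⟨⟨hxs, hCU hfx, hpx⟩, hfx⟩

end Topology

section Stabilization

variable {R E F K : Type*}

def stabilization [Semiring R] [AddCommMonoid F] [Module R F] (f : E → F) (π : E → K)
    (T : Submodule R F) : E × T → F × K :=
  fun p => (f p.1 + p.2, π p.1)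

theorem stabilization_apply_mk_zero [Semiring R] [AddCommMonoid F] [Module R F] (f : E → F)
    (π : E → K) (T : Submodule R F) (x : E) : stabilization f π T (x, 0) = (f x, π x) := by
  simp [stabilization]

theorem LinearMap.bijective_stabilization [Ring R] [AddCommGroup E] [Module R E]
    [AddCommGroup F] [Module R F] (D : E →ₗ[R] F) (π : E →ₗ[R] ker D)
    (hπ : ∀ k : ker D, π k = k) {T : Submodule R F} (hT : IsCompl (range D) T) :
    Function.Bijective (stabilization D π T) := by
  let Φ : E × T →ₗ[R] F × ker D :=
    (D ∘ₗ fst R E T + T.subtype ∘ₗ snd R E T).prod (π ∘ₗ fst R E T)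
  change Function.Bijective Φ
  refine ⟨(injective_iff_map_eq_zero Φ).2 ?_, fun ⟨y, k⟩ => ?_⟩
  · rintro ⟨x, t⟩ h
    obtain ⟨hDxt, hπx⟩ := Prod.ext_iff.1 h
    change D x + t = 0 at hDxt
    have hDx : D x = 0 := Submodule.disjoint_def.1 hT.disjoint _ (mem_range_self D x)
      (eq_neg_of_add_eq_zero_left hDxt ▸ T.neg_mem t.2)
    have ht : t = 0 := Subtype.ext (by simpa [hDx] using hDxt)
    have hx : (⟨x, hDx⟩ : ker D) = 0 := (hπ ⟨x, hDx⟩).symm.trans hπx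
    simp only [Prod.mk_eq_zero, ht, and_true]
    exact congrArg Subtype.val hx
  · have hy : y ∈ range D ⊔ T := hT.sup_eq_top ▸ Submodule.mem_top
    obtain ⟨_, ⟨x, rfl⟩, t, ht, rfl⟩ := Submodule.mem_sup.1 hy
    refine ⟨(x - π x + k, ⟨t, ht⟩), Prod.ext ?_ ?_⟩
    · simp [Φ]
    · simp [Φ, hπ]

end Stabilization

theorem HasStrictFDerivAt.stabilization {𝕜 E F K : Type*} [NontriviallyNormedField 𝕜]
    [NormedAddCommGroup E] [NormedSpace 𝕜 E] [NormedAddCommGroup F] [NormedSpace 𝕜 F]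
    [NormedAddCommGroup K] [NormedSpace 𝕜 K] {f : E → F} {f' : E →L[𝕜] F} {x : E}
    (hf : HasStrictFDerivAt f f' x) (π : E →L[𝕜] K) (T : Submodule 𝕜 F) (t : T) :
    HasStrictFDerivAt (stabilization f π T)
      ((f'.comp (.fst 𝕜 E T) + T.subtypeL.comp (.snd 𝕜 E T)).prod (π.comp (.fst 𝕜 E T)))
      (x, t) :=
  ((hf.comp _ hasStrictFDerivAt_fst).add (T.subtypeL.comp (.snd 𝕜 E T)).hasStrictFDerivAt).prodMk
    (π.comp (.fst 𝕜 E T)).hasStrictFDerivAt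

theorem stmt_18_general {L Y : Type*}
    [NormedAddCommGroup L] [NormedSpace ℝ L] [CompleteSpace L]
    [NormedAddCommGroup Y] [NormedSpace ℝ Y] [CompleteSpace Y]
    (f : L → Y) (hf : ContDiff ℝ 1 f)
    (hker : ∀ v : L, FiniteDimensional ℝ (LinearMap.ker ((fderiv ℝ f v) : L →ₗ[ℝ] Y)))
    (hcoker : ∀ v : L,
      FiniteDimensional ℝ (Y ⧸ LinearMap.range ((fderiv ℝ f v) : L →ₗ[ℝ] Y))) :
    IsLocallyProper f := by
  refine isLocallyProper_iff_forall_isLocallyProperAt.2 fun v => ?_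
  set D : L →ₗ[ℝ] Y := (fderiv ℝ f v : L →ₗ[ℝ] Y)
  have := hker v
  have := hcoker v
  obtain ⟨π, hπ⟩ := Submodule.ClosedComplemented.of_finiteDimensional (LinearMap.ker D)
  obtain ⟨T, hT⟩ := (LinearMap.range D).exists_isCompl
  have : FiniteDimensional ℝ T := (Submodule.quotientEquivOfIsCompl _ T hT).finiteDimensional
  have hbij := D.bijective_stabilization π hπ hT
  have hstab := ((hf.contDiffAt (x := v)).hasStrictFDerivAt one_ne_zero).stabilization π T 0
  obtain ⟨Φ, hΦ⟩ : ∃ Φ : (L × T) ≃L[ℝ] Y × LinearMap.ker D,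
      HasStrictFDerivAt (stabilization f π T) (Φ : L × T →L[ℝ] Y × LinearMap.ker D) (v, 0) :=
    ⟨.ofBijective _ (LinearMap.ker_eq_bot.2 hbij.1) (LinearMap.range_eq_top.2 hbij.2),
      by rwa [ContinuousLinearEquiv.coe_ofBijective]⟩
  exact (hΦ.toOpenPartialHomeomorph _).isLocallyProperAt_of_apply_mk_eq hf.continuous
    π.continuous (stabilization_apply_mk_zero f π T) hΦ.mem_toOpenPartialHomeomorph_source

/-- A `C¹` map between Banach spaces all of whose derivatives are Fredholm operators is
locally proper. -/
theorem stmt_18 {L Y : Type*}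
    [NormedAddCommGroup L] [NormedSpace ℝ L] [CompleteSpace L]
    [NormedAddCommGroup Y] [NormedSpace ℝ Y] [CompleteSpace Y]
    (f : L → Y) (hf : ContDiff ℝ 1 f)
    (hker : ∀ v : L, FiniteDimensional ℝ (LinearMap.ker ((fderiv ℝ f v) : L →ₗ[ℝ] Y)))
    (hcoker : ∀ v : L,
      FiniteDimensional ℝ (Y ⧸ LinearMap.range ((fderiv ℝ f v) : L →ₗ[ℝ] Y)))
    (hclosed : ∀ v : L, IsClosed (Set.range (fderiv ℝ f v))) :
    IsLocallyProper f :=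
  stmt_18_general f hf hker hcoker
end

section
/- Let q : Y → S be a continuous map admitting a section e : S → Y together with a fiberwise homotopy h : Y × [0,1] → Y over S from e ∘ q to id_Y. Then for sheaves of spectra, the pullback functor q* : Sh(S; Sp) → Sh(Y; Sp) is fully faithful, and the counit/unit give an isomorphism q_* q* ≅ s* q* for any section s of q. In particular the unit map id → q_* q* evaluated on the unit sheaf is inverse to the map induced by any section. -/
/-!
Write `P, H : Y × [0,1] → Y` for the projection and the homotopy and `iₜ y = (y, t)`.
Pushforwards compose strictly, so each identity `e ≫ q = 𝟙`, `P ≫ q = H ≫ q`, `iₜ ≫ P = 𝟙`,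
`i₁ ≫ H = 𝟙`, `i₀ ≫ H = q ≫ e` is an equality of right adjoints, and its conjugate is an
isomorphism between the corresponding composites of pullbacks. Isomorphisms obtained this way are
automatically coherent: by proof irrelevance, two of them between the same adjunctions agree.

`e* q* ≅ 𝟭` makes `q*` faithful. For fullness, let `φ : q* A ⟶ q* B`. As `P* q* ≅ H* q*` and
`P*` is full, `H* φ` is `P* ψ` up to these isomorphisms. Restricting along `i₁` gives `ψ = φ`,
restricting along `i₀` exhibits `ψ` as `q* (e* φ)` up to isomorphism, so `φ` is in the image of
`q*`. Then the unit `𝟭 ⟶ q_* q*` is invertible, and for a section `s`,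
`q_* q* ≅ 𝟭 ≅ s* q*`.
-/

open CategoryTheory Functor

theorem CategoryTheory.Functor.eq_comp_of_section {C D E : Type*} [Category C] [Category D]
    [Category E] {Rq : D ⥤ C} {RP RH : E ⥤ D} {Ri : D ⥤ E} {RW : D ⥤ D}
    (hPH : RP ⋙ Rq = RH ⋙ Rq) (hiP : Ri ⋙ RP = 𝟭 D) (hiH : Ri ⋙ RH = RW) : Rq = RW ⋙ Rq := by
  rw [← hiH, Functor.assoc, ← hPH, ← Functor.assoc, hiP, Functor.id_comp]

namespace CategoryTheory.Adjunction

variable {B C D E : Type*} [Category B] [Category C] [Category D] [Category E]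

theorem comp_id {L : C ⥤ D} {R : D ⥤ C} (adj : L ⊣ R) : adj.comp Adjunction.id = adj :=
  Adjunction.ext (by ext; simp [Adjunction.id])

theorem id_comp {L : C ⥤ D} {R : D ⥤ C} (adj : L ⊣ R) : Adjunction.id.comp adj = adj :=
  Adjunction.ext (by ext; simp [Adjunction.id])

theorem comp_assoc {L₁ : B ⥤ C} {R₁ : C ⥤ B} {L₂ : C ⥤ D} {R₂ : D ⥤ C} {L₃ : D ⥤ E} {R₃ : E ⥤ D}
    (adj₁ : L₁ ⊣ R₁) (adj₂ : L₂ ⊣ R₂) (adj₃ : L₃ ⊣ R₃) :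
    (adj₁.comp adj₂).comp adj₃ = adj₁.comp (adj₂.comp adj₃) :=
  Adjunction.ext (by ext; simp)

def leftAdjointIsoOfEq {L₁ L₂ : C ⥤ D} {R₁ R₂ : D ⥤ C} (adj₁ : L₁ ⊣ R₁) (adj₂ : L₂ ⊣ R₂)
    (h : R₁ = R₂) : L₁ ≅ L₂ :=
  (conjugateIsoEquiv adj₂ adj₁).symm (eqToIso h.symm)

section

variable {L₁ L₂ L₃ : C ⥤ D} {R₁ R₂ R₃ : D ⥤ C} (adj₁ : L₁ ⊣ R₁) (adj₂ : L₂ ⊣ R₂) (adj₃ : L₃ ⊣ R₃)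

@[simp]
theorem leftAdjointIsoOfEq_refl (h : R₁ = R₁) : leftAdjointIsoOfEq adj₁ adj₁ h = Iso.refl L₁ := by
  ext1; exact conjugateEquiv_symm_id adj₁

@[simp]
theorem leftAdjointIsoOfEq_trans (h₁₂ : R₁ = R₂) (h₂₃ : R₂ = R₃) :
    leftAdjointIsoOfEq adj₁ adj₂ h₁₂ ≪≫ leftAdjointIsoOfEq adj₂ adj₃ h₂₃ =
      leftAdjointIsoOfEq adj₁ adj₃ (h₁₂.trans h₂₃) := by
  ext1
  simp [leftAdjointIsoOfEq, conjugateEquiv_symm_comp]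

theorem leftAdjointIsoOfEq_hom (h : R₁ = R₂) :
    (leftAdjointIsoOfEq adj₁ adj₂ h).hom = (conjugateEquiv adj₂ adj₁).symm (eqToHom h.symm) :=
  rfl

theorem isoWhiskerLeft_leftAdjointIsoOfEq {L : B ⥤ C} {R : C ⥤ B} (adj : L ⊣ R) (h : R₁ = R₂) :
    isoWhiskerLeft L (leftAdjointIsoOfEq adj₁ adj₂ h) =
      leftAdjointIsoOfEq (adj.comp adj₁) (adj.comp adj₂) (by rw [h]) := by
  ext1
  rw [isoWhiskerLeft_hom, leftAdjointIsoOfEq_hom, leftAdjointIsoOfEq_hom, Equiv.eq_symm_apply,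
    conjugateEquiv_whiskerLeft, Equiv.apply_symm_apply]
  subst h
  simp

theorem isoWhiskerRight_leftAdjointIsoOfEq {L : D ⥤ E} {R : E ⥤ D} (adj : L ⊣ R) (h : R₁ = R₂) :
    isoWhiskerRight (leftAdjointIsoOfEq adj₁ adj₂ h) L =
      leftAdjointIsoOfEq (adj₁.comp adj) (adj₂.comp adj) (by rw [h]) := by
  ext1
  rw [isoWhiskerRight_hom, leftAdjointIsoOfEq_hom, leftAdjointIsoOfEq_hom, Equiv.eq_symm_apply,
    conjugateEquiv_whiskerRight, Equiv.apply_symm_apply]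
  subst h
  simp

end

theorem eq_conj_of_map_eq_conj
    {Lq : C ⥤ D} {Rq : D ⥤ C} (adjq : Lq ⊣ Rq)
    {LP LH : D ⥤ E} {RP RH : E ⥤ D} (adjP : LP ⊣ RP) (adjH : LH ⊣ RH) (hPH : RP ⋙ Rq = RH ⋙ Rq)
    {Li : E ⥤ D} {Ri : D ⥤ E} (adji : Li ⊣ Ri) {LW RW : D ⥤ D} (adjW : LW ⊣ RW)
    (hiP : Ri ⋙ RP = 𝟭 D) (hiH : Ri ⋙ RH = RW) {X Y : C} {φ ψ : Lq.obj X ⟶ Lq.obj Y}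
    (hψ : LP.map ψ = (leftAdjointIsoOfEq (adjq.comp adjP) (adjq.comp adjH) hPH).hom.app X ≫
      LH.map φ ≫ (leftAdjointIsoOfEq (adjq.comp adjP) (adjq.comp adjH) hPH).inv.app Y) :
    ψ = (leftAdjointIsoOfEq adjq (adjq.comp adjW) (eq_comp_of_section hPH hiP hiH)).hom.app X ≫
      LW.map φ ≫
        (leftAdjointIsoOfEq adjq (adjq.comp adjW) (eq_comp_of_section hPH hiP hiH)).inv.app Y := by
  set θ := leftAdjointIsoOfEq (adjq.comp adjP) (adjq.comp adjH) hPH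
  set ω := leftAdjointIsoOfEq adjq (adjq.comp adjW) (eq_comp_of_section hPH hiP hiH)
  let σ := leftAdjointIsoOfEq Adjunction.id (adjP.comp adji) hiP.symm
  let τ := leftAdjointIsoOfEq (adjH.comp adji) adjW hiH
  have hω : isoWhiskerLeft Lq σ ≪≫ isoWhiskerRight θ Li ≪≫ isoWhiskerLeft Lq τ = ω := by
    rw [isoWhiskerLeft_leftAdjointIsoOfEq, isoWhiskerRight_leftAdjointIsoOfEq,
      isoWhiskerLeft_leftAdjointIsoOfEq, comp_assoc, comp_assoc, leftAdjointIsoOfEq_trans,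
      leftAdjointIsoOfEq_trans]
    exact congrArg (leftAdjointIsoOfEq · (adjq.comp adjW) _) (comp_id adjq)
  calc ψ = σ.hom.app _ ≫ Li.map (LP.map ψ) ≫ σ.inv.app _ := (NatIso.naturality_2 σ ψ).symm
    _ = σ.hom.app _ ≫ Li.map (θ.hom.app X) ≫ (τ.hom.app _ ≫ LW.map φ ≫ τ.inv.app _) ≫
          Li.map (θ.inv.app Y) ≫ σ.inv.app _ := by
      rw [hψ, NatIso.naturality_2 τ φ]
      simp only [Functor.map_comp, Functor.comp_map, Category.assoc]
    _ = ω.hom.app X ≫ LW.map φ ≫ ω.inv.app Y := by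
      simp only [← hω, Iso.trans_hom, Iso.trans_inv, NatTrans.comp_app, isoWhiskerLeft_hom,
        isoWhiskerLeft_inv, isoWhiskerRight_hom, isoWhiskerRight_inv, whiskerLeft_app,
        whiskerRight_app, Category.assoc]

theorem full_of_homotopy
    {Lq : C ⥤ D} {Rq : D ⥤ C} (adjq : Lq ⊣ Rq) {Le : D ⥤ C} {Re : C ⥤ D} (adje : Le ⊣ Re)
    (hre : Re ⋙ Rq = 𝟭 C)
    {LP LH : D ⥤ E} {RP RH : E ⥤ D} (adjP : LP ⊣ RP) (adjH : LH ⊣ RH) (hPH : RP ⋙ Rq = RH ⋙ Rq)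
    [LP.Full] {L₀ L₁ : E ⥤ D} {R₀ R₁ : D ⥤ E} (adj₀ : L₀ ⊣ R₀) (adj₁ : L₁ ⊣ R₁)
    (h₀P : R₀ ⋙ RP = 𝟭 D) (h₀H : R₀ ⋙ RH = Rq ⋙ Re)
    (h₁P : R₁ ⋙ RP = 𝟭 D) (h₁H : R₁ ⋙ RH = 𝟭 D) :
    Lq.Full where
  map_surjective {X Y} φ := by
    let θ := leftAdjointIsoOfEq (adjq.comp adjP) (adjq.comp adjH) hPH
    let ρ := leftAdjointIsoOfEq Adjunction.id (adjq.comp adje) hre.symm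
    obtain ⟨ψ, hψ⟩ := LP.map_surjective (θ.hom.app X ≫ LH.map φ ≫ θ.inv.app Y)
    have hψφ : ψ = φ := by
      have hω : leftAdjointIsoOfEq adjq (adjq.comp Adjunction.id)
          (eq_comp_of_section hPH h₁P h₁H) = Iso.refl Lq :=
        (congrArg (leftAdjointIsoOfEq adjq · _) (comp_id adjq)).trans (leftAdjointIsoOfEq_refl _ _)
      simpa [hω] using eq_conj_of_map_eq_conj adjq adjP adjH hPH adj₁ Adjunction.id h₁P h₁H hψ
    have hω : isoWhiskerRight ρ Lq =
        leftAdjointIsoOfEq adjq (adjq.comp (adje.comp adjq)) (eq_comp_of_section hPH h₀P h₀H) := by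
      rw [isoWhiskerRight_leftAdjointIsoOfEq, comp_assoc]
      exact congrArg (leftAdjointIsoOfEq · _ _) (id_comp adjq)
    refine ⟨ρ.hom.app X ≫ Le.map φ ≫ ρ.inv.app Y, ?_⟩
    conv_rhs =>
      rw [← hψφ, eq_conj_of_map_eq_conj adjq adjP adjH hPH adj₀ (adje.comp adjq) h₀P h₀H hψ, ← hω]
    simp

end CategoryTheory.Adjunction

open TopCat Limits

universe u v

namespace TopCat.Sheaf

theorem pushforward_comp_eq_of_comp_eq (C : Type*) [Category C] {X Y Y' Z : TopCat}
    {f : X ⟶ Y} {g : Y ⟶ Z} {f' : X ⟶ Y'} {g' : Y' ⟶ Z} (h : f ≫ g = f' ≫ g') :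
    pushforward C f ⋙ pushforward C g = pushforward C f' ⋙ pushforward C g' :=
  congrArg (pushforward C) h

theorem pushforward_comp_eq_id (C : Type*) [Category C] {X Y : TopCat} {f : X ⟶ Y} {g : Y ⟶ X}
    (h : f ≫ g = 𝟙 X) : pushforward C f ⋙ pushforward C g = 𝟭 _ :=
  congrArg (pushforward C) h

variable (A : Type v) [Category.{u} A] {FA : A → A → Type*} {CA : A → Type u}
  [∀ X Y, FunLike (FA X Y) (CA X) (CA Y)] [ConcreteCategory.{u} A FA] [HasColimits A] [HasLimits A]
  [PreservesLimits (CategoryTheory.forget A)] [PreservesFilteredColimits (CategoryTheory.forget A)]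
  [(CategoryTheory.forget A).ReflectsIsomorphisms]

noncomputable def pullbackCompIsoOfSection {Y S : TopCat.{u}} {q : Y ⟶ S} {s : S ⟶ Y}
    (hs : s ≫ q = 𝟙 S) : pullback A q ⋙ pullback A s ≅ 𝟭 (S.Sheaf A) :=
  Adjunction.leftAdjointIsoOfEq ((pullbackPushforwardAdjunction A q).comp
    (pullbackPushforwardAdjunction A s)) Adjunction.id (pushforward_comp_eq_id A hs)

theorem pullback_full_of_homotopy {Y S : TopCat.{u}} {q : Y ⟶ S} {e : S ⟶ Y} (he : e ≫ q = 𝟙 S)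
    (P H : TopCat.of (Y × unitInterval) ⟶ Y) (hP : ∀ p, P p = p.1) [(pullback A P).Full]
    (h₀ : ∀ y, H (y, 0) = e (q y)) (h₁ : ∀ y, H (y, 1) = y) (hover : ∀ p, q (H p) = q p.1) :
    (pullback A q).Full := by
  let i : unitInterval → (Y ⟶ TopCat.of (Y × unitInterval)) := fun t =>
    TopCat.ofHom ⟨fun y => (y, t), by fun_prop⟩
  have hPH : P ≫ q = H ≫ q := TopCat.ext fun p => by simp [hP, hover]
  have h₀P : i 0 ≫ P = 𝟙 Y := TopCat.ext fun y => hP _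
  have h₁P : i 1 ≫ P = 𝟙 Y := TopCat.ext fun y => hP _
  have h₀H : i 0 ≫ H = q ≫ e := TopCat.ext h₀
  have h₁H : i 1 ≫ H = 𝟙 Y := TopCat.ext h₁
  exact Adjunction.full_of_homotopy (pullbackPushforwardAdjunction A q)
    (pullbackPushforwardAdjunction A e) (pushforward_comp_eq_id A he)
    (pullbackPushforwardAdjunction A P) (pullbackPushforwardAdjunction A H)
    (pushforward_comp_eq_of_comp_eq A hPH)
    (pullbackPushforwardAdjunction A (i 0)) (pullbackPushforwardAdjunction A (i 1))
    (pushforward_comp_eq_id A h₀P) (pushforward_comp_eq_of_comp_eq A h₀H)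
    (pushforward_comp_eq_id A h₁P) (pushforward_comp_eq_id A h₁H)

end TopCat.Sheaf

/-- If `q : Y → S` is a contractible map (it admits a section `e` and a fiberwise
homotopy over `S` from `e ∘ q` to the identity), then — granted homotopy invariance
(`A¹`-invariance) of sheaf theory, which holds for sheaves of spectra — the pullback
functor `q*` on sheaves is fully faithful, the unit `id → q_* q*` is an isomorphism, and
`q_* q* ≅ s* q*` for any section `s` of `q`. -/
theorem stmt_19
    (A : Type v) [Category.{u} A] {FA : A → A → Type*} {CA : A → Type u}
    [∀ X Y, FunLike (FA X Y) (CA X) (CA Y)] [ConcreteCategory.{u} A FA] [HasColimits A] [HasLimits A]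
    [PreservesLimits (CategoryTheory.forget A)]
    [PreservesFilteredColimits (CategoryTheory.forget A)]
    [(CategoryTheory.forget A).ReflectsIsomorphisms]
    -- homotopy invariance: pullback along `pr : T × [0,1] → T` is fully faithful
    (hA1 : ∀ (T : TopCat.{u}) (pr : TopCat.of (↑T × ↑unitInterval) ⟶ T),
      (∀ p : ↑T × ↑unitInterval, pr p = p.1) →
      (TopCat.Sheaf.pullback A pr).Full ∧ (TopCat.Sheaf.pullback A pr).Faithful)
    (Y S : TopCat.{u}) (q : Y ⟶ S) (e : S ⟶ Y) (he : e ≫ q = 𝟙 S)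
    (h : ↑Y × ↑unitInterval → ↑Y) (hc : Continuous h)
    (h0 : ∀ y : ↑Y, h (y, 0) = e (q y))
    (h1 : ∀ y : ↑Y, h (y, 1) = y)
    (hover : ∀ (y : ↑Y) (t : ↑unitInterval), q (h (y, t)) = q y) :
    (TopCat.Sheaf.pullback A q).Full ∧ (TopCat.Sheaf.pullback A q).Faithful ∧
    IsIso ((TopCat.Sheaf.pullbackPushforwardAdjunction A q).unit) ∧
    ∀ s : S ⟶ Y, s ≫ q = 𝟙 S →
      Nonempty (TopCat.Sheaf.pullback A q ⋙ TopCat.Sheaf.pushforward A q ≅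
        TopCat.Sheaf.pullback A q ⋙ TopCat.Sheaf.pullback A s) := by
  let P : TopCat.of (Y × unitInterval) ⟶ Y := TopCat.ofHom ⟨Prod.fst, continuous_fst⟩
  have := (hA1 Y P fun _ => rfl).1
  have : (Sheaf.pullback A q).Full := Sheaf.pullback_full_of_homotopy A he P
    (TopCat.ofHom ⟨h, hc⟩) (fun _ => rfl) h0 h1 fun p => hover p.1 p.2
  have : (Sheaf.pullback A q).Faithful := .of_comp_iso (Sheaf.pullbackCompIsoOfSection A he)
  refine ⟨inferInstance, inferInstance, inferInstance, fun s hs => ⟨?_⟩⟩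
  exact (asIso (Sheaf.pullbackPushforwardAdjunction A q).unit).symm ≪≫
    (Sheaf.pullbackCompIsoOfSection A hs).symm
end
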